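/- arXiv:1810.03353 — 2 statements merged into one kernel-verified Lean document; each statement's English description precedes it below -/
import Mathlib

section
/- (Multiple robustness of the efficient influence function, case 𝓜₁: instrument density and treatment propensity score correct, all other working models arbitrary.) Suppose E(Y | Z, X, R=1) = 𝓗(X)·τ(Z,X) + ω(X) a.s. for some measurable functions 𝓗, ω, that P(D=1 | Z,X,R=0) = τ(Z,X) a.s. (propensity score equality), and set Δ := E[𝓗(X) | R=1]. Let H̄, ω̄ : 𝒳 → ℝ be arbitrary measurable functions and π̄ : {0,1}×𝒳 → (0,1) an arbitrary measurable function (all displayed integrands integrable). Then E[ (−1)^{1−Z} · { (R/q†)·[Y − H̄(X)·τ(Z,X) − ω̄(X)] − ((1−R)/q†)·(π̄(Z,X)/(1−π̄(Z,X)))·H̄(X)·[D − τ(Z,X)] } / ( λ(Z|X)·[τ(1,X) − τ(0,X)] ) + (R/q†)·(H̄(X) − Δ) ] = 0. -/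
/-!
Split the mean over `{R = 1}` and `{R = 0}`. On `{R = 0}` the integrand is a function of `(Z, X)`
times `D - τ(Z, X)`, whose conditional mean given `(Z, X)` vanishes by the propensity score
equality. On `{R = 1}`, conditioning on `(Z, X)` replaces the residual `Y - H̄ τ - ω̄` by
`(𝓗 - H̄)(X) τ(Z, X) + (ω - ω̄)(X)`. Conditioning next on `X` averages an inverse-propensity
contrast `(-1)^(1-Z) ψ(Z, X) / λ(Z|X)` to `ψ(1, X) - ψ(0, X)`; for `ψ` the residual above divided
by `τ(1, X) - τ(0, X)` this is `(𝓗 - H̄)(X)`, whatever `H̄` and `ω̄` are. Adding `H̄(X) - Δ`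
leaves `𝓗(X) - Δ`, which has mean zero on `{R = 1}`.
-/

open MeasureTheory ProbabilityTheory

section CondExp

variable {Ω : Type*} {m m0 : MeasurableSpace Ω} {μ : Measure Ω} [IsFiniteMeasure μ]
  {a d f g : Ω → ℝ}

/-- Unlike `condExp_mul_of_stronglyMeasurable_left`, only the whole sum needs to be integrable:
on `{|d| ≤ n}` the usual pull-out property applies. -/
theorem condExp_mul_add_of_stronglyMeasurable (hm : m ≤ m0) (ha : StronglyMeasurable[m] a)
    (hd : StronglyMeasurable[m] d) (hf : Integrable f μ)
    (h : Integrable (fun ω => a ω * f ω + d ω) μ) :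
    μ[fun ω => a ω * f ω + d ω | m] =ᵐ[μ] fun ω => a ω * μ[f | m] ω + d ω := by
  have key : ∀ n : ℕ, ∀ᵐ ω ∂μ, |d ω| ≤ n →
      μ[fun ω => a ω * f ω + d ω | m] ω = a ω * μ[f | m] ω + d ω := by
    intro n
    set t : Set Ω := {ω | |d ω| ≤ n}
    have ht : MeasurableSet[m] t := (measurable_abs.comp hd.measurable) measurableSet_Iic
    have hdt : Integrable (t.indicator d) μ := by
      refine (integrable_const (n : ℝ)).mono'
        ((hd.indicator ht).mono hm).aestronglyMeasurable (ae_of_all _ fun ω => ?_)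
      by_cases hω : ω ∈ t
      · rw [Set.indicator_of_mem hω, Real.norm_eq_abs]
        exact hω
      · simp [hω]
    have hsplit : t.indicator (fun ω => a ω * f ω + d ω) = t.indicator a * f + t.indicator d := by
      ext ω
      by_cases hω : ω ∈ t <;> simp [hω]
    have hat : Integrable (t.indicator a * f) μ := by
      simpa [hsplit] using (h.indicator (hm t ht)).sub hdt
    filter_upwards [condExp_indicator h ht, condExp_add hat hdt m,
      condExp_mul_of_stronglyMeasurable_left (ha.indicator ht) hat hf] with ω h1 h2 h3 hω
    rw [hsplit, h2, Pi.add_apply, h3, condExp_of_stronglyMeasurable hm (hd.indicator ht) hdt] at h1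
    simpa [Set.indicator_of_mem (show ω ∈ t from hω)] using h1.symm
  filter_upwards [ae_all_iff.mpr key] with ω hω using hω _ (Nat.le_ceil _)

theorem integrable_mul_add_of_condExp_eq (hm : m ≤ m0) (ha : StronglyMeasurable[m] a)
    (hd : StronglyMeasurable[m] d) (hf : Integrable f μ) (hfg : μ[f | m] =ᵐ[μ] g)
    (h : Integrable (fun ω => a ω * f ω + d ω) μ) :
    Integrable (fun ω => a ω * g ω + d ω) μ := by
  refine integrable_condExp.congr ((condExp_mul_add_of_stronglyMeasurable hm ha hd hf h).trans ?_)
  filter_upwards [hfg] with ω hω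
  rw [hω]

theorem integral_mul_add_eq_of_condExp_eq (hm : m ≤ m0) (ha : StronglyMeasurable[m] a)
    (hd : StronglyMeasurable[m] d) (hf : Integrable f μ) (hfg : μ[f | m] =ᵐ[μ] g)
    (h : Integrable (fun ω => a ω * f ω + d ω) μ) :
    ∫ ω, (a ω * f ω + d ω) ∂μ = ∫ ω, (a ω * g ω + d ω) ∂μ := by
  rw [← integral_condExp hm]
  refine integral_congr_ae ((condExp_mul_add_of_stronglyMeasurable hm ha hd hf h).trans ?_)
  filter_upwards [hfg] with ω hω
  rw [hω]

theorem integral_mul_sub_eq_zero_of_condExp_eq (hm : m ≤ m0) (ha : StronglyMeasurable[m] a)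
    (hg : StronglyMeasurable[m] g) (hf : Integrable f μ) (hfg : μ[f | m] =ᵐ[μ] g)
    (h : Integrable (fun ω => a ω * (f ω - g ω)) μ) :
    ∫ ω, a ω * (f ω - g ω) ∂μ = 0 := by
  have hd : StronglyMeasurable[m] fun ω => -(a ω * g ω) := (ha.mul hg).neg
  have h' : Integrable (fun ω => a ω * f ω + -(a ω * g ω)) μ :=
    h.congr (ae_of_all _ fun ω => by ring)
  calc ∫ ω, a ω * (f ω - g ω) ∂μ = ∫ ω, (a ω * f ω + -(a ω * g ω)) ∂μ :=
        integral_congr_ae (ae_of_all _ fun ω => by ring)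
    _ = ∫ ω, (a ω * g ω + -(a ω * g ω)) ∂μ :=
        integral_mul_add_eq_of_condExp_eq hm ha hd hf hfg h'
    _ = 0 := by simp

end CondExp

section Cond

variable {Ω : Type*} [MeasurableSpace Ω] {μ : Measure Ω} {f : Ω → ℝ} {s : Set Ω}

theorem MeasureTheory.Integrable.cond (hf : Integrable f μ) (s : Set Ω) : Integrable f μ[|s] := by
  by_cases hs : μ s = 0
  · simp [cond_eq_zero_of_meas_eq_zero hs]
  · exact hf.restrict.smul_measure (ENNReal.inv_ne_top.mpr hs)

theorem setIntegral_eq_zero_of_integral_cond_eq_zero [IsFiniteMeasure μ]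
    (h : ∫ x, f x ∂μ[|s] = 0) : ∫ x in s, f x ∂μ = 0 := by
  by_cases hs : μ s = 0
  · simp [Measure.restrict_eq_zero.mpr hs]
  · rw [ProbabilityTheory.cond, integral_smul_measure, smul_eq_zero] at h
    refine h.resolve_left ?_
    simpa using ENNReal.toReal_ne_zero.mpr ⟨hs, measure_ne_top μ s⟩

theorem integral_eq_zero_of_integral_cond_eq_zero [IsFiniteMeasure μ] (hs : MeasurableSet s)
    (hf : Integrable f μ) (h : ∫ x, f x ∂μ[|s] = 0) (hc : ∫ x, f x ∂μ[|sᶜ] = 0) :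
    ∫ x, f x ∂μ = 0 := by
  rw [← integral_add_compl hs hf, setIntegral_eq_zero_of_integral_cond_eq_zero h,
    setIntegral_eq_zero_of_integral_cond_eq_zero hc, add_zero]

theorem integral_sub_integral_eq_zero [IsZeroOrProbabilityMeasure μ] (f : Ω → ℝ) :
    ∫ x, (f x - ∫ y, f y ∂μ) ∂μ = 0 := by
  rcases eq_zero_or_isProbabilityMeasure μ with rfl | _
  · simp
  · simpa [average_eq_integral] using integral_sub_average μ f

end Cond

section InstrumentalVariable

variable {Ω 𝒳 : Type*} [MeasurableSpace 𝒳] {Z : Ω → Bool} {X : Ω → 𝒳}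

noncomputable def waldWeight (lam : 𝒳 → ℝ) (tau : Bool → 𝒳 → ℝ) (z : Bool) (x : 𝒳) : ℝ :=
  (if z then 1 else -1) / ((if z then lam x else 1 - lam x) * (tau true x - tau false x))

theorem measurable_waldWeight {lam : 𝒳 → ℝ} (hlam : Measurable lam) {tau : Bool → 𝒳 → ℝ}
    (htau : ∀ z, Measurable (tau z)) (z : Bool) : Measurable (waldWeight lam tau z) := by
  have := htau true
  have := htau false
  unfold waldWeight
  cases z <;> simp only [Bool.false_eq_true, if_true, if_false] <;> fun_prop

theorem stronglyMeasurable_comap_prodMk {f : Bool → 𝒳 → ℝ} (hf : ∀ z, Measurable (f z)) :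
    StronglyMeasurable[MeasurableSpace.comap (fun ω => (Z ω, X ω)) inferInstance]
      fun ω => f (Z ω) (X ω) :=
  ((measurable_from_prod_countable_right (f := Function.uncurry f) hf).comp
    (comap_measurable _)).stronglyMeasurable

variable [MeasurableSpace Ω] {ν : Measure Ω} [IsFiniteMeasure ν]

theorem integrable_ite_one_zero (hZ : Measurable Z) :
    Integrable (fun ω => if Z ω then (1 : ℝ) else 0) ν :=
  (integrable_const (1 : ℝ)).mono'
    ((measurable_of_countable fun b : Bool => if b then (1 : ℝ) else 0).comp
      hZ).aestronglyMeasurable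
    (ae_of_all _ fun ω => by split <;> simp)

theorem integral_ipw_contrast_add (hZ : Measurable Z) (hX : Measurable X) {lam : 𝒳 → ℝ}
    (hlam : Measurable lam)
    (hlam_ver : (fun ω => lam (X ω)) =ᵐ[ν]
      ν[(fun ω => if Z ω then (1 : ℝ) else 0) | MeasurableSpace.comap X inferInstance])
    (hlam_pos : ∀ᵐ ω ∂ν, 0 < lam (X ω) ∧ lam (X ω) < 1)
    {ψ : Bool → 𝒳 → ℝ} (hψ : ∀ z, Measurable (ψ z)) {c : 𝒳 → ℝ} (hc : Measurable c)
    (h : Integrable (fun ω => (if Z ω then (1 : ℝ) else -1) * ψ (Z ω) (X ω) /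
      (if Z ω then lam (X ω) else 1 - lam (X ω)) + c (X ω)) ν) :
    ∫ ω, ((if Z ω then (1 : ℝ) else -1) * ψ (Z ω) (X ω) /
      (if Z ω then lam (X ω) else 1 - lam (X ω)) + c (X ω)) ∂ν =
      ∫ ω, (ψ true (X ω) - ψ false (X ω) + c (X ω)) ∂ν := by
  set u : 𝒳 → ℝ := fun x => ψ true x / lam x + ψ false x / (1 - lam x)
  set v : 𝒳 → ℝ := fun x => c x - ψ false x / (1 - lam x)
  have hlin : (fun ω => (if Z ω then (1 : ℝ) else -1) * ψ (Z ω) (X ω) /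
      (if Z ω then lam (X ω) else 1 - lam (X ω)) + c (X ω)) =
      fun ω => u (X ω) * (if Z ω then 1 else 0) + v (X ω) := by
    ext ω
    cases Z ω <;> simp only [u, v, Bool.false_eq_true, if_true, if_false] <;> ring
  have hu : StronglyMeasurable[MeasurableSpace.comap X inferInstance] fun ω => u (X ω) :=
    (((hψ true).div hlam).add ((hψ false).div (measurable_const.sub hlam))).comp
      (comap_measurable X) |>.stronglyMeasurable
  have hv : StronglyMeasurable[MeasurableSpace.comap X inferInstance] fun ω => v (X ω) :=
    (hc.sub ((hψ false).div (measurable_const.sub hlam))).comp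
      (comap_measurable X) |>.stronglyMeasurable
  rw [hlin] at h ⊢
  rw [integral_mul_add_eq_of_condExp_eq hX.comap_le hu hv (integrable_ite_one_zero hZ)
    hlam_ver.symm h]
  refine integral_congr_ae ?_
  filter_upwards [hlam_pos] with ω hω
  have hl0 : lam (X ω) ≠ 0 := hω.1.ne'
  have hl1 : 1 - lam (X ω) ≠ 0 := (sub_pos.mpr hω.2).ne'
  simp only [u, v]
  field_simp
  ring

theorem integral_wald_residual_add (hZ : Measurable Z) (hX : Measurable X) {lam : 𝒳 → ℝ}
    (hlam : Measurable lam)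
    (hlam_ver : (fun ω => lam (X ω)) =ᵐ[ν]
      ν[(fun ω => if Z ω then (1 : ℝ) else 0) | MeasurableSpace.comap X inferInstance])
    (hlam_pos : ∀ᵐ ω ∂ν, 0 < lam (X ω) ∧ lam (X ω) < 1)
    {tau : Bool → 𝒳 → ℝ} (htau : ∀ z, Measurable (tau z))
    (htau_ne : ∀ᵐ ω ∂ν, tau true (X ω) - tau false (X ω) ≠ 0)
    {Y : Ω → ℝ} (hY : Integrable Y ν) {H w : 𝒳 → ℝ} (hH : Measurable H) (hw : Measurable w)
    (hout : ν[Y | MeasurableSpace.comap (fun ω => (Z ω, X ω)) inferInstance] =ᵐ[ν]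
      fun ω => H (X ω) * tau (Z ω) (X ω) + w (X ω))
    {Hbar wbar c : 𝒳 → ℝ} (hHbar : Measurable Hbar) (hwbar : Measurable wbar)
    (hc : Measurable c) (κ : ℝ)
    (h : Integrable (fun ω => κ * waldWeight lam tau (Z ω) (X ω) *
      (Y ω - Hbar (X ω) * tau (Z ω) (X ω) - wbar (X ω)) + c (X ω)) ν) :
    ∫ ω, (κ * waldWeight lam tau (Z ω) (X ω) *
      (Y ω - Hbar (X ω) * tau (Z ω) (X ω) - wbar (X ω)) + c (X ω)) ∂ν =
      ∫ ω, (κ * (H (X ω) - Hbar (X ω)) + c (X ω)) ∂ν := by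
  set a : Bool → 𝒳 → ℝ := fun z x => κ * waldWeight lam tau z x
  set d : Bool → 𝒳 → ℝ := fun z x => c x - a z x * (Hbar x * tau z x + wbar x)
  set ψ : Bool → 𝒳 → ℝ := fun z x =>
    κ * ((H x - Hbar x) * tau z x + (w x - wbar x)) / (tau true x - tau false x)
  have ha : ∀ z, Measurable (a z) := fun z => (measurable_waldWeight hlam htau z).const_mul κ
  have hd : ∀ z, Measurable (d z) := fun z => hc.sub ((ha z).mul ((hHbar.mul (htau z)).add hwbar))
  have hψ : ∀ z, Measurable (ψ z) := fun z => by
    have := htau true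
    have := htau false
    have := htau z
    fun_prop
  have hm := (hZ.prodMk hX).comap_le
  have hlin : (fun ω => κ * waldWeight lam tau (Z ω) (X ω) *
      (Y ω - Hbar (X ω) * tau (Z ω) (X ω) - wbar (X ω)) + c (X ω)) =
      fun ω => a (Z ω) (X ω) * Y ω + d (Z ω) (X ω) := by
    ext ω
    simp only [a, d]
    ring
  have hlin' : (fun ω => a (Z ω) (X ω) * (H (X ω) * tau (Z ω) (X ω) + w (X ω)) +
      d (Z ω) (X ω)) = fun ω => (if Z ω then (1 : ℝ) else -1) * ψ (Z ω) (X ω) /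
      (if Z ω then lam (X ω) else 1 - lam (X ω)) + c (X ω) := by
    ext ω
    simp only [a, d, ψ, waldWeight, div_eq_mul_inv, mul_inv]
    ring
  rw [hlin] at h ⊢
  have h' := integrable_mul_add_of_condExp_eq hm (stronglyMeasurable_comap_prodMk ha)
    (stronglyMeasurable_comap_prodMk hd) hY hout h
  rw [integral_mul_add_eq_of_condExp_eq hm (stronglyMeasurable_comap_prodMk ha)
    (stronglyMeasurable_comap_prodMk hd) hY hout h]
  rw [hlin'] at h' ⊢
  rw [integral_ipw_contrast_add hZ hX hlam hlam_ver hlam_pos hψ hc h']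
  refine integral_congr_ae ?_
  filter_upwards [htau_ne] with ω hω
  simp only [ψ]
  field_simp
  ring

theorem integral_mul_treatment_residual_eq_zero (hZ : Measurable Z) (hX : Measurable X)
    {D : Ω → Bool} (hD : Measurable D) {tau : Bool → 𝒳 → ℝ} (htau : ∀ z, Measurable (tau z))
    (hpse : (fun ω => tau (Z ω) (X ω)) =ᵐ[ν]
      ν[(fun ω => if D ω then (1 : ℝ) else 0) |
        MeasurableSpace.comap (fun ω => (Z ω, X ω)) inferInstance])
    {a : Bool → 𝒳 → ℝ} (ha : ∀ z, Measurable (a z))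
    (h : Integrable (fun ω => a (Z ω) (X ω) *
      ((if D ω then (1 : ℝ) else 0) - tau (Z ω) (X ω))) ν) :
    ∫ ω, a (Z ω) (X ω) * ((if D ω then (1 : ℝ) else 0) - tau (Z ω) (X ω)) ∂ν = 0 :=
  integral_mul_sub_eq_zero_of_condExp_eq (hZ.prodMk hX).comap_le
    (stronglyMeasurable_comap_prodMk ha) (stronglyMeasurable_comap_prodMk htau)
    (integrable_ite_one_zero hD) hpse.symm h

end InstrumentalVariable

section EfficientInfluence

variable {Ω 𝒳 : Type*} (R Z D : Ω → Bool) (X : Ω → 𝒳) (Y : Ω → ℝ) (q : ℝ) (lam : 𝒳 → ℝ)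
  (tau : Bool → 𝒳 → ℝ) (Hbar wbar : 𝒳 → ℝ) (pibar : Bool → 𝒳 → ℝ) (Δ : ℝ)

noncomputable def efficientInfluence (ω : Ω) : ℝ :=
  (if Z ω then (1:ℝ) else -1) *
      ((if R ω then (1:ℝ) else 0) / q * (Y ω - Hbar (X ω) * tau (Z ω) (X ω) - wbar (X ω)) -
        (if R ω then (0:ℝ) else 1) / q * (pibar (Z ω) (X ω) / (1 - pibar (Z ω) (X ω))) *
          Hbar (X ω) * ((if D ω then (1:ℝ) else 0) - tau (Z ω) (X ω))) /
      ((if Z ω then lam (X ω) else 1 - lam (X ω)) * (tau true (X ω) - tau false (X ω))) +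
    (if R ω then (1:ℝ) else 0) / q * (Hbar (X ω) - Δ)

variable {R Z D X Y q lam tau Hbar wbar pibar Δ} [MeasurableSpace Ω] {ν : Measure Ω}

theorem efficientInfluence_ae_eq_of_R_true (hR : ∀ᵐ ω ∂ν, R ω = true) :
    efficientInfluence R Z D X Y q lam tau Hbar wbar pibar Δ =ᵐ[ν] fun ω =>
      q⁻¹ * waldWeight lam tau (Z ω) (X ω) * (Y ω - Hbar (X ω) * tau (Z ω) (X ω) - wbar (X ω)) +
        q⁻¹ * (Hbar (X ω) - Δ) := by
  filter_upwards [hR] with ω hω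
  simp only [efficientInfluence, waldWeight, hω, if_true]
  ring

theorem efficientInfluence_ae_eq_of_R_false (hR : ∀ᵐ ω ∂ν, R ω = false) :
    efficientInfluence R Z D X Y q lam tau Hbar wbar pibar Δ =ᵐ[ν] fun ω =>
      -(q⁻¹ * waldWeight lam tau (Z ω) (X ω) * (pibar (Z ω) (X ω) / (1 - pibar (Z ω) (X ω))) *
        Hbar (X ω)) * ((if D ω then (1 : ℝ) else 0) - tau (Z ω) (X ω)) := by
  filter_upwards [hR] with ω hω
  simp only [efficientInfluence, waldWeight, hω, Bool.false_eq_true, if_false]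
  ring

end EfficientInfluence

theorem stmt_8_general
    {Ω 𝒳 : Type*} [MeasurableSpace Ω] [MeasurableSpace 𝒳]
    (P : Measure Ω) [IsProbabilityMeasure P]
    (R Z D : Ω → Bool) (X : Ω → 𝒳) (Y : Ω → ℝ)
    (hR : Measurable R) (hZ : Measurable Z) (hD : Measurable D)
    (hX : Measurable X) (hYint : Integrable Y P)
    -- λ(1|x) := P(Z=1 | X=x, R=1), with 0 < λ(1|X) < 1 a.s. on {R=1}
    (lam : 𝒳 → ℝ) (hlam_meas : Measurable lam)
    (hlam_ver : (fun ω => lam (X ω)) =ᵐ[P[|{ω | R ω = true}]]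
      (P[|{ω | R ω = true}])[(fun ω => if Z ω then (1:ℝ) else 0) |
        MeasurableSpace.comap X inferInstance])
    (hlam_pos : ∀ᵐ ω ∂(P[|{ω | R ω = true}]), 0 < lam (X ω) ∧ lam (X ω) < 1)
    -- τ(z,x) := P(D=1 | Z=z, X=x, R=1), with τ(1,X) − τ(0,X) ≠ 0 a.s. on {R=1}
    (tau : Bool → 𝒳 → ℝ) (htau_meas : Measurable fun p : Bool × 𝒳 => tau p.1 p.2)
    (htau_ne : ∀ᵐ ω ∂(P[|{ω | R ω = true}]), tau true (X ω) - tau false (X ω) ≠ 0)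
    -- true outcome decomposition: E(Y | Z, X, R=1) = 𝓗(X)·τ(Z,X) + ω(X) a.s.
    (Hfun wfun : 𝒳 → ℝ) (hHfun_meas : Measurable Hfun) (hwfun_meas : Measurable wfun)
    (hout : (P[|{ω | R ω = true}])[Y |
        MeasurableSpace.comap (fun ω => (Z ω, X ω)) inferInstance]
      =ᵐ[P[|{ω | R ω = true}]]
        fun ω => Hfun (X ω) * tau (Z ω) (X ω) + wfun (X ω))
    -- propensity score equality: P(D=1 | Z, X, R=0) = τ(Z,X) a.s.
    (hpse : (fun ω => tau (Z ω) (X ω)) =ᵐ[P[|{ω | R ω = false}]]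
      (P[|{ω | R ω = false}])[(fun ω => if D ω then (1:ℝ) else 0) |
        MeasurableSpace.comap (fun ω => (Z ω, X ω)) inferInstance])
    -- arbitrary measurable working models H̄, ω̄ : 𝒳 → ℝ and π̄ : {0,1}×𝒳 → (0,1)
    (Hbar wbar : 𝒳 → ℝ) (hHbar_meas : Measurable Hbar) (hwbar_meas : Measurable wbar)
    (pibar : Bool → 𝒳 → ℝ) (hpibar_meas : Measurable fun p : Bool × 𝒳 => pibar p.1 p.2)
    -- integrability of the displayed integrands
    (hint : Integrable (fun ω =>
        (if Z ω then (1:ℝ) else -1) *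
            ((if R ω then (1:ℝ) else 0) / (P {ω | R ω = true}).toReal *
                (Y ω - Hbar (X ω) * tau (Z ω) (X ω) - wbar (X ω)) -
              (if R ω then (0:ℝ) else 1) / (P {ω | R ω = true}).toReal *
                (pibar (Z ω) (X ω) / (1 - pibar (Z ω) (X ω))) * Hbar (X ω) *
                ((if D ω then (1:ℝ) else 0) - tau (Z ω) (X ω))) /
            ((if Z ω then lam (X ω) else 1 - lam (X ω)) *
              (tau true (X ω) - tau false (X ω))) +
          (if R ω then (1:ℝ) else 0) / (P {ω | R ω = true}).toReal *
            (Hbar (X ω) - ∫ ω', Hfun (X ω') ∂(P[|{ω | R ω = true}]))) P) :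
    -- conclusion: mean zero, with Δ := E[𝓗(X) | R=1]
    ∫ ω,
        ((if Z ω then (1:ℝ) else -1) *
            ((if R ω then (1:ℝ) else 0) / (P {ω | R ω = true}).toReal *
                (Y ω - Hbar (X ω) * tau (Z ω) (X ω) - wbar (X ω)) -
              (if R ω then (0:ℝ) else 1) / (P {ω | R ω = true}).toReal *
                (pibar (Z ω) (X ω) / (1 - pibar (Z ω) (X ω))) * Hbar (X ω) *
                ((if D ω then (1:ℝ) else 0) - tau (Z ω) (X ω))) /
            ((if Z ω then lam (X ω) else 1 - lam (X ω)) *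
              (tau true (X ω) - tau false (X ω))) +
          (if R ω then (1:ℝ) else 0) / (P {ω | R ω = true}).toReal *
            (Hbar (X ω) - ∫ ω', Hfun (X ω') ∂(P[|{ω | R ω = true}]))) ∂P = 0 := by
  set A : Set Ω := {ω | R ω = true}
  set q : ℝ := (P A).toReal
  set Δ : ℝ := ∫ ω, Hfun (X ω) ∂P[|A]
  set F := efficientInfluence R Z D X Y q lam tau Hbar wbar pibar Δ
  change Integrable F P at hint
  change ∫ ω, F ω ∂P = 0
  have hA : MeasurableSet A := hR (measurableSet_singleton true)
  have hAc : Aᶜ = {ω | R ω = false} := by ext; simp [A]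
  have htau : ∀ z, Measurable (tau z) := fun _ => htau_meas.of_uncurry_left
  have hpibar : ∀ z, Measurable (pibar z) := fun _ => hpibar_meas.of_uncurry_left
  refine integral_eq_zero_of_integral_cond_eq_zero hA hint ?_ ?_
  · have hF : F =ᵐ[P[|A]] _ := efficientInfluence_ae_eq_of_R_true (ae_cond_mem hA)
    rw [integral_congr_ae hF, integral_wald_residual_add hZ hX hlam_meas hlam_ver hlam_pos htau
      htau_ne (hYint.cond A) hHfun_meas hwfun_meas hout hHbar_meas hwbar_meas
      (c := fun x => q⁻¹ * (Hbar x - Δ)) (by fun_prop) q⁻¹ ((hint.cond A).congr hF)]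
    calc ∫ ω, (q⁻¹ * (Hfun (X ω) - Hbar (X ω)) + q⁻¹ * (Hbar (X ω) - Δ)) ∂P[|A]
        = q⁻¹ * ∫ ω, (Hfun (X ω) - Δ) ∂P[|A] := by
          rw [← integral_const_mul]
          congr with ω
          ring
      _ = 0 := by rw [integral_sub_integral_eq_zero, mul_zero]
  · rw [hAc]
    have hF : F =ᵐ[P[|{ω | R ω = false}]] _ :=
      efficientInfluence_ae_eq_of_R_false (ae_cond_mem (hR (measurableSet_singleton false)))
    rw [integral_congr_ae hF]
    refine integral_mul_treatment_residual_eq_zero hZ hX hD htau hpse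
      (a := fun z x => -(q⁻¹ * waldWeight lam tau z x * (pibar z x / (1 - pibar z x)) * Hbar x))
      (fun z => ?_) ((hint.cond _).congr hF)
    have := measurable_waldWeight hlam_meas htau z
    have := hpibar z
    fun_prop

/-- Multiple robustness, case 𝓜₁: instrument density and treatment propensity
score are correct, while the working models `H̄`, `ω̄`, `π̄` are arbitrary. Then the efficient
influence function evaluated at these working models has mean zero. -/
theorem stmt_8
    {Ω 𝒳 : Type*} [MeasurableSpace Ω] [MeasurableSpace 𝒳] [StandardBorelSpace 𝒳]
    (P : Measure Ω) [IsProbabilityMeasure P]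
    (R Z D : Ω → Bool) (X : Ω → 𝒳) (Y : Ω → ℝ)
    (hR : Measurable R) (hZ : Measurable Z) (hD : Measurable D)
    (hX : Measurable X) (hY : Measurable Y) (hYint : Integrable Y P)
    -- q† := P(R=1) ∈ (0,1)
    (hq : 0 < P {ω | R ω = true} ∧ P {ω | R ω = true} < 1)
    -- λ(1|x) := P(Z=1 | X=x, R=1), with 0 < λ(1|X) < 1 a.s. on {R=1}
    (lam : 𝒳 → ℝ) (hlam_meas : Measurable lam)
    (hlam_ver : (fun ω => lam (X ω)) =ᵐ[P[|{ω | R ω = true}]]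
      (P[|{ω | R ω = true}])[(fun ω => if Z ω then (1:ℝ) else 0) |
        MeasurableSpace.comap X inferInstance])
    (hlam_pos : ∀ᵐ ω ∂(P[|{ω | R ω = true}]), 0 < lam (X ω) ∧ lam (X ω) < 1)
    -- τ(z,x) := P(D=1 | Z=z, X=x, R=1), with τ(1,X) − τ(0,X) ≠ 0 a.s. on {R=1}
    (tau : Bool → 𝒳 → ℝ) (htau_meas : Measurable fun p : Bool × 𝒳 => tau p.1 p.2)
    (htau_ver : (fun ω => tau (Z ω) (X ω)) =ᵐ[P[|{ω | R ω = true}]]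
      (P[|{ω | R ω = true}])[(fun ω => if D ω then (1:ℝ) else 0) |
        MeasurableSpace.comap (fun ω => (Z ω, X ω)) inferInstance])
    (htau_ne : ∀ᵐ ω ∂(P[|{ω | R ω = true}]), tau true (X ω) - tau false (X ω) ≠ 0)
    -- true outcome decomposition: E(Y | Z, X, R=1) = 𝓗(X)·τ(Z,X) + ω(X) a.s.
    (Hfun wfun : 𝒳 → ℝ) (hHfun_meas : Measurable Hfun) (hwfun_meas : Measurable wfun)
    (hout : (P[|{ω | R ω = true}])[Y |
        MeasurableSpace.comap (fun ω => (Z ω, X ω)) inferInstance]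
      =ᵐ[P[|{ω | R ω = true}]]
        fun ω => Hfun (X ω) * tau (Z ω) (X ω) + wfun (X ω))
    -- propensity score equality: P(D=1 | Z, X, R=0) = τ(Z,X) a.s.
    (hpse : (fun ω => tau (Z ω) (X ω)) =ᵐ[P[|{ω | R ω = false}]]
      (P[|{ω | R ω = false}])[(fun ω => if D ω then (1:ℝ) else 0) |
        MeasurableSpace.comap (fun ω => (Z ω, X ω)) inferInstance])
    -- arbitrary measurable working models H̄, ω̄ : 𝒳 → ℝ and π̄ : {0,1}×𝒳 → (0,1)
    (Hbar wbar : 𝒳 → ℝ) (hHbar_meas : Measurable Hbar) (hwbar_meas : Measurable wbar)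
    (pibar : Bool → 𝒳 → ℝ) (hpibar_meas : Measurable fun p : Bool × 𝒳 => pibar p.1 p.2)
    (hpibar_range : ∀ z x, 0 < pibar z x ∧ pibar z x < 1)
    -- integrability of the displayed integrands
    (hHint : Integrable (fun ω => Hfun (X ω)) (P[|{ω | R ω = true}]))
    (hint : Integrable (fun ω =>
        (if Z ω then (1:ℝ) else -1) *
            ((if R ω then (1:ℝ) else 0) / (P {ω | R ω = true}).toReal *
                (Y ω - Hbar (X ω) * tau (Z ω) (X ω) - wbar (X ω)) -
              (if R ω then (0:ℝ) else 1) / (P {ω | R ω = true}).toReal *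
                (pibar (Z ω) (X ω) / (1 - pibar (Z ω) (X ω))) * Hbar (X ω) *
                ((if D ω then (1:ℝ) else 0) - tau (Z ω) (X ω))) /
            ((if Z ω then lam (X ω) else 1 - lam (X ω)) *
              (tau true (X ω) - tau false (X ω))) +
          (if R ω then (1:ℝ) else 0) / (P {ω | R ω = true}).toReal *
            (Hbar (X ω) - ∫ ω', Hfun (X ω') ∂(P[|{ω | R ω = true}]))) P) :
    -- conclusion: mean zero, with Δ := E[𝓗(X) | R=1]
    ∫ ω,
        ((if Z ω then (1:ℝ) else -1) *
            ((if R ω then (1:ℝ) else 0) / (P {ω | R ω = true}).toReal *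
                (Y ω - Hbar (X ω) * tau (Z ω) (X ω) - wbar (X ω)) -
              (if R ω then (0:ℝ) else 1) / (P {ω | R ω = true}).toReal *
                (pibar (Z ω) (X ω) / (1 - pibar (Z ω) (X ω))) * Hbar (X ω) *
                ((if D ω then (1:ℝ) else 0) - tau (Z ω) (X ω))) /
            ((if Z ω then lam (X ω) else 1 - lam (X ω)) *
              (tau true (X ω) - tau false (X ω))) +
          (if R ω then (1:ℝ) else 0) / (P {ω | R ω = true}).toReal *
            (Hbar (X ω) - ∫ ω', Hfun (X ω') ∂(P[|{ω | R ω = true}]))) ∂P = 0 :=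
  stmt_8_general P R Z D X Y hR hZ hD hX hYint lam hlam_meas hlam_ver hlam_pos tau htau_meas htau_ne
    Hfun wfun hHfun_meas hwfun_meas hout hpse Hbar wbar hHbar_meas hwbar_meas pibar hpibar_meas hint
end

section
/- (Multiple robustness of the efficient influence function, case 𝓜₃: outcome decomposition and data-source propensity correct, instrument density and treatment propensity arbitrary.) Suppose E(Y | Z, X, R=1) = 𝓗(X)·τ(Z,X) + ω(X) a.s. for measurable functions 𝓗, ω, that P(D=1 | Z,X,R=0) = τ(Z,X) a.s. (propensity score equality), and set Δ := E[𝓗(X) | R=1]. Let λ̄ : {0,1}×𝒳 → ℝ∖{0} and τ̄ : {0,1}×𝒳 → ℝ be arbitrary measurable functions with τ̄(1,X) − τ̄(0,X) ≠ 0 a.s. (all displayed integrands integrable). Then E[ (−1)^{1−Z} · { (R/q†)·[Y − 𝓗(X)·τ̄(Z,X) − ω(X)] − ((1−R)/q†)·(π(Z,X)/(1−π(Z,X)))·𝓗(X)·[D − τ̄(Z,X)] } / ( λ̄(Z|X)·[τ̄(1,X) − τ̄(0,X)] ) + (R/q†)·(𝓗(X) − Δ) ] = 0. -/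
/-!
Conditionally on `(Z, X)`, the outcome term has mean `π 𝓗 (τ - τ̄)` by the outcome decomposition,
and the treatment term has mean `(1 - π) · π / (1 - π) · 𝓗 (τ - τ̄)` by propensity score equality,
so the two cancel whatever `λ̄` and `τ̄` are; the `Δ` term is centred by the definition of `Δ`.
The weight `1 / (λ̄ (τ̄(1, X) - τ̄(0, X)))` and the working models need not be bounded, so the
conditional expectations are pulled out only on the `(Z, X)`-measurable sets where the relevant
products are bounded by `n`, and `n → ∞` by dominated convergence.
-/

open MeasureTheory ProbabilityTheory

section CondExp

variable {Ω : Type*} {m m0 : MeasurableSpace Ω} {μ : Measure Ω} {f g h : Ω → ℝ} {C : ℝ}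

theorem integrable_mul_sub_of_condExp_ae_eq (hm : m ≤ m0) (hf : StronglyMeasurable[m] f)
    (hf_bdd : ∀ᵐ ω ∂μ, ‖f ω‖ ≤ C) (hg : Integrable g μ) (hgh : μ[g|m] =ᵐ[μ] h) :
    Integrable (fun ω => f ω * (g ω - h ω)) μ :=
  (hg.sub (integrable_condExp.congr hgh)).bdd_mul (hf.mono hm).aestronglyMeasurable hf_bdd

variable [IsFiniteMeasure μ]

theorem integral_mul_eq_of_condExp_ae_eq (hm : m ≤ m0) (hf : StronglyMeasurable[m] f)
    (hf_bdd : ∀ᵐ ω ∂μ, ‖f ω‖ ≤ C) (hg : Integrable g μ) (hgh : μ[g|m] =ᵐ[μ] h) :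
    ∫ ω, f ω * g ω ∂μ = ∫ ω, f ω * h ω ∂μ := by
  have hfg : Integrable (f * g) μ := hg.bdd_mul (hf.mono hm).aestronglyMeasurable hf_bdd
  calc ∫ ω, f ω * g ω ∂μ = ∫ ω, (μ[f * g|m]) ω ∂μ := (integral_condExp hm).symm
    _ = ∫ ω, f ω * h ω ∂μ := integral_congr_ae <|
        (condExp_mul_of_stronglyMeasurable_left hf hfg hg).trans (hgh.mono fun ω hω => by
          simp [hω])

theorem integral_mul_sub_eq_zero_of_condExp_ae_eq (hm : m ≤ m0) (hf : StronglyMeasurable[m] f)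
    (hf_bdd : ∀ᵐ ω ∂μ, ‖f ω‖ ≤ C) (hg : Integrable g μ) (hgh : μ[g|m] =ᵐ[μ] h) :
    ∫ ω, f ω * (g ω - h ω) ∂μ = 0 := by
  have hf' : AEStronglyMeasurable f μ := (hf.mono hm).aestronglyMeasurable
  simp_rw [mul_sub]
  rw [integral_sub (hg.bdd_mul hf' hf_bdd) ((integrable_condExp.congr hgh).bdd_mul hf' hf_bdd),
    integral_mul_eq_of_condExp_ae_eq hm hf hf_bdd hg hgh, sub_self]

end CondExp

section Cond

variable {Ω : Type*} {m m0 : MeasurableSpace Ω} {μ : Measure Ω} {s : Set Ω} {f g h F : Ω → ℝ}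
  {C : ℝ}

theorem restrict_eq_measure_smul_cond (μ : Measure Ω) [IsFiniteMeasure μ] (s : Set Ω) :
    μ.restrict s = μ s • μ[|s] := by
  rw [ProbabilityTheory.cond, smul_smul]
  rcases eq_or_ne (μ s) 0 with hs | hs
  · simp [Measure.restrict_eq_zero.mpr hs]
  · rw [ENNReal.mul_inv_cancel hs (measure_ne_top _ _), one_smul]

theorem MeasureTheory.Integrable.cond_s10 (hF : Integrable F μ) : Integrable F μ[|s] := by
  rcases eq_or_ne (μ s) 0 with hs | hs
  · simp [cond_eq_zero_of_meas_eq_zero hs]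
  · exact hF.restrict.smul_measure (ENNReal.inv_ne_top.mpr hs)

variable [IsFiniteMeasure μ]

theorem MeasureTheory.IntegrableOn.of_integrable_cond (hF : Integrable F μ[|s]) :
    IntegrableOn F s μ := by
  rw [IntegrableOn, restrict_eq_measure_smul_cond]
  exact hF.smul_measure (measure_ne_top _ _)

theorem setIntegral_eq_measureReal_mul_integral_cond :
    ∫ ω in s, F ω ∂μ = μ.real s * ∫ ω, F ω ∂μ[|s] := by
  rw [restrict_eq_measure_smul_cond, integral_smul_measure, smul_eq_mul, measureReal_def]

theorem integrableOn_mul_sub_of_condExp_cond (hm : m ≤ m0) (hf : StronglyMeasurable[m] f)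
    (hf_bdd : ∀ᵐ ω ∂μ, ‖f ω‖ ≤ C) (hg : Integrable g μ) (hgh : μ[|s][g|m] =ᵐ[μ[|s]] h) :
    IntegrableOn (fun ω => f ω * (g ω - h ω)) s μ :=
  .of_integrable_cond <| integrable_mul_sub_of_condExp_ae_eq hm hf
    (cond_absolutelyContinuous.ae_le hf_bdd) hg.cond_s10 hgh

theorem setIntegral_mul_sub_eq_zero_of_condExp_cond (hm : m ≤ m0) (hf : StronglyMeasurable[m] f)
    (hf_bdd : ∀ᵐ ω ∂μ, ‖f ω‖ ≤ C) (hg : Integrable g μ) (hgh : μ[|s][g|m] =ᵐ[μ[|s]] h) :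
    ∫ ω in s, f ω * (g ω - h ω) ∂μ = 0 := by
  rw [setIntegral_eq_measureReal_mul_integral_cond,
    integral_mul_sub_eq_zero_of_condExp_ae_eq hm hf (cond_absolutelyContinuous.ae_le hf_bdd)
      hg.cond_s10 hgh, mul_zero]

end Cond

theorem integral_eq_zero_of_forall_setIntegral_le_eq_zero {Ω : Type*} [MeasurableSpace Ω]
    {μ : Measure Ω} {A b : Ω → ℝ} (hb : Measurable b) (hA : Integrable A μ)
    (h : ∀ n : ℕ, ∫ ω in {ω | b ω ≤ n}, A ω ∂μ = 0) : ∫ ω, A ω ∂μ = 0 := by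
  have hunion : (⋃ n : ℕ, {ω | b ω ≤ n}) = Set.univ :=
    Set.eq_univ_of_forall fun ω => Set.mem_iUnion.mpr (exists_nat_ge (b ω))
  have hlim := tendsto_setIntegral_of_monotone (μ := μ) (f := A)
    (fun n : ℕ => measurableSet_le hb measurable_const)
    (fun i j hij ω (hω : b ω ≤ i) => hω.trans (Nat.cast_le.mpr hij)) (hunion ▸ hA.integrableOn)
  rw [hunion, Measure.restrict_univ] at hlim
  exact tendsto_nhds_unique hlim (by simp_rw [h]; exact tendsto_const_nhds)

section Model

variable {Ω : Type*} {m m0 : MeasurableSpace Ω} {μ : Measure Ω} [IsFiniteMeasure μ]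
  {R D : Ω → Bool} {f π : Ω → ℝ} {C : ℝ}

theorem integrable_ite_of_measurable (hR : Measurable R) (a b : ℝ) :
    Integrable (fun ω => if R ω then a else b) μ :=
  .of_bound (Measurable.ite (hR (measurableSet_singleton true)) measurable_const
    measurable_const).aestronglyMeasurable (max ‖a‖ ‖b‖)
    (ae_of_all _ fun ω => by split_ifs <;> simp)

theorem condExp_ite_zero_one_ae_eq (hm : m ≤ m0) (hR : Measurable R)
    (hπ : μ[fun ω => if R ω then (1:ℝ) else 0|m] =ᵐ[μ] π) :
    μ[fun ω => if R ω then (0:ℝ) else 1|m] =ᵐ[μ] fun ω => 1 - π ω := by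
  have hsub : (fun ω => if R ω then (0:ℝ) else 1)
      = (fun _ => (1:ℝ)) - fun ω => if R ω then (1:ℝ) else 0 := by
    funext ω; by_cases h : R ω <;> simp [h]
  rw [hsub]
  filter_upwards [condExp_sub (m := m) (integrable_const (1:ℝ))
    (integrable_ite_of_measurable (μ := μ) hR 1 0), hπ] with ω h1 h2
  rw [h1, Pi.sub_apply, condExp_const hm, h2]

theorem integral_mul_ite_eq_integral_mul_odds_mul_ite (hm : m ≤ m0) (hR : Measurable R)
    (hπ : μ[fun ω => if R ω then (1:ℝ) else 0|m] =ᵐ[μ] π) (hπm : StronglyMeasurable[m] π)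
    (hπ1 : ∀ᵐ ω ∂μ, π ω ≠ 1) (hf : StronglyMeasurable[m] f) (hf_bdd : ∀ᵐ ω ∂μ, ‖f ω‖ ≤ C)
    (hfπ_bdd : ∀ᵐ ω ∂μ, ‖f ω * (π ω / (1 - π ω))‖ ≤ C) :
    ∫ ω, f ω * (if R ω then 1 else 0) ∂μ
      = ∫ ω, f ω * (π ω / (1 - π ω)) * (if R ω then 0 else 1) ∂μ := by
  have hfπ : StronglyMeasurable[m] fun ω => f ω * (π ω / (1 - π ω)) :=
    hf.mul (hπm.div (stronglyMeasurable_const.sub hπm))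
  rw [integral_mul_eq_of_condExp_ae_eq hm hf hf_bdd (integrable_ite_of_measurable hR 1 0) hπ,
    integral_mul_eq_of_condExp_ae_eq hm hfπ hfπ_bdd (integrable_ite_of_measurable hR 0 1)
      (condExp_ite_zero_one_ae_eq hm hR hπ)]
  refine integral_congr_ae (hπ1.mono fun ω hω => ?_)
  have : 1 - π ω ≠ 0 := sub_ne_zero.mpr hω.symm
  field_simp

variable {Y G H τ τ' w : Ω → ℝ}

theorem integral_bdd_weight_mul_eif_eq_zero (hm : m ≤ m0) (hR : Measurable R) (hD : Measurable D)
    (hY : Integrable Y μ) (hG : StronglyMeasurable[m] G) (hH : StronglyMeasurable[m] H)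
    (hτ : StronglyMeasurable[m] τ) (hτ' : StronglyMeasurable[m] τ')
    (hπm : StronglyMeasurable[m] π)
    (hout : μ[|{ω | R ω = true}][Y|m] =ᵐ[μ[|{ω | R ω = true}]] fun ω => H ω * τ ω + w ω)
    (hpse : μ[|{ω | R ω = false}][fun ω => if D ω then (1:ℝ) else 0|m]
      =ᵐ[μ[|{ω | R ω = false}]] τ)
    (hπ : μ[fun ω => if R ω then (1:ℝ) else 0|m] =ᵐ[μ] π) (hπ1 : ∀ᵐ ω ∂μ, π ω ≠ 1)
    (hG_bdd : ∀ᵐ ω ∂μ, ‖G ω‖ ≤ C)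
    (hGπH_bdd : ∀ᵐ ω ∂μ, ‖G ω * (π ω / (1 - π ω) * H ω)‖ ≤ C)
    (hGHτ_bdd : ∀ᵐ ω ∂μ, ‖G ω * (H ω * (τ ω - τ' ω))‖ ≤ C)
    (hGHτπ_bdd : ∀ᵐ ω ∂μ, ‖G ω * (H ω * (τ ω - τ' ω) * (π ω / (1 - π ω)))‖ ≤ C) :
    ∫ ω, G ω * ((if R ω then 1 else 0) * (Y ω - H ω * τ' ω - w ω) -
      (if R ω then 0 else 1) * (π ω / (1 - π ω)) * H ω * ((if D ω then 1 else 0) - τ' ω)) ∂μ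
      = 0 := by
  set s := {ω | R ω = true}
  set t := {ω | R ω = false}
  have hs : MeasurableSet s := hR (measurableSet_singleton true)
  have ht : MeasurableSet t := hR (measurableSet_singleton false)
  have hGπH : StronglyMeasurable[m] fun ω => G ω * (π ω / (1 - π ω) * H ω) :=
    hG.mul ((hπm.div (stronglyMeasurable_const.sub hπm)).mul hH)
  have hGHτ : StronglyMeasurable[m] fun ω => G ω * (H ω * (τ ω - τ' ω)) :=
    hG.mul (hH.mul (hτ.sub hτ'))
  have hGHτπ_bdd' : ∀ᵐ ω ∂μ, ‖G ω * (H ω * (τ ω - τ' ω)) * (π ω / (1 - π ω))‖ ≤ C :=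
    hGHτπ_bdd.mono fun ω h => by rwa [mul_assoc]
  have hD_int := integrable_ite_of_measurable (μ := μ) hD 1 0
  -- The bracket splits into the outcome residual on `R`, the treatment residual on `¬R`
  -- (centred by `hout` and `hpse`), and `H (τ - τ')` times `1_R - 1_{¬R} π / (1 - π)`,
  -- which has conditional mean zero.
  set r₁ : Ω → ℝ := fun ω => G ω * (Y ω - (H ω * τ ω + w ω))
  set r₀ : Ω → ℝ := fun ω => G ω * (π ω / (1 - π ω) * H ω) * ((if D ω then 1 else 0) - τ ω)
  set b₁ : Ω → ℝ := fun ω => G ω * (H ω * (τ ω - τ' ω)) * (if R ω then 1 else 0)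
  set b₀ : Ω → ℝ := fun ω =>
    G ω * (H ω * (τ ω - τ' ω)) * (π ω / (1 - π ω)) * (if R ω then 0 else 1)
  have hsplit : (fun ω => G ω * ((if R ω then 1 else 0) * (Y ω - H ω * τ' ω - w ω) -
      (if R ω then 0 else 1) * (π ω / (1 - π ω)) * H ω * ((if D ω then 1 else 0) - τ' ω)))
      = s.indicator r₁ - t.indicator r₀ + (b₁ - b₀) := by
    funext ω
    by_cases h : R ω <;> simp [r₁, r₀, b₁, b₀, s, t, Set.indicator, h] <;> ring
  have hr₁ := integrableOn_mul_sub_of_condExp_cond hm hG hG_bdd hY hout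
  have hr₀ := integrableOn_mul_sub_of_condExp_cond hm hGπH hGπH_bdd hD_int hpse
  have hb₁ : Integrable b₁ μ := (integrable_ite_of_measurable hR 1 0).bdd_mul
    (hGHτ.mono hm).aestronglyMeasurable hGHτ_bdd
  have hb₀ : Integrable b₀ μ := (integrable_ite_of_measurable hR 0 1).bdd_mul
    ((hGHτ.mul (hπm.div (stronglyMeasurable_const.sub hπm))).mono hm).aestronglyMeasurable
    hGHτπ_bdd'
  rw [hsplit, integral_add' ((hr₁.integrable_indicator hs).sub (hr₀.integrable_indicator ht))
      (hb₁.sub hb₀), integral_sub' (hr₁.integrable_indicator hs) (hr₀.integrable_indicator ht),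
    integral_sub' hb₁ hb₀, integral_indicator hs, integral_indicator ht,
    setIntegral_mul_sub_eq_zero_of_condExp_cond hm hG hG_bdd hY hout,
    setIntegral_mul_sub_eq_zero_of_condExp_cond hm hGπH hGπH_bdd hD_int hpse,
    integral_mul_ite_eq_integral_mul_odds_mul_ite hm hR hπ hπm hπ1 hGHτ hGHτ_bdd hGHτπ_bdd',
    sub_self, zero_add]
  exact sub_self _

theorem ite_div_mul_eq_indicator (c : ℝ) (F : Ω → ℝ) (ω : Ω) :
    (if R ω then (1:ℝ) else 0) / c * F ω
      = {ω | R ω = true}.indicator (fun ω => c⁻¹ * F ω) ω := by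
  by_cases h : R ω <;> simp [Set.indicator, h]

theorem integrable_ite_div_mul (hR : Measurable R) (c : ℝ) {F : Ω → ℝ}
    (hF : Integrable F μ[|{ω | R ω = true}]) :
    Integrable (fun ω => (if R ω then (1:ℝ) else 0) / c * F ω) μ := by
  simp_rw [ite_div_mul_eq_indicator]
  exact IntegrableOn.integrable_indicator
    ((IntegrableOn.of_integrable_cond hF).const_mul c⁻¹) (hR (measurableSet_singleton true))

theorem integral_ite_div_measureReal_mul_sub_integral_cond (hR : Measurable R) {F : Ω → ℝ}
    (hF : Integrable F μ[|{ω | R ω = true}]) :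
    ∫ ω, (if R ω then (1:ℝ) else 0) / μ.real {ω | R ω = true} *
      (F ω - ∫ ω', F ω' ∂μ[|{ω | R ω = true}]) ∂μ = 0 := by
  have hs : MeasurableSet {ω | R ω = true} := hR (measurableSet_singleton true)
  simp_rw [ite_div_mul_eq_indicator _ (fun ω => F ω - ∫ ω', F ω' ∂μ[|{ω | R ω = true}])]
  rw [integral_indicator hs,
    setIntegral_eq_measureReal_mul_integral_cond, integral_const_mul,
    integral_sub hF (integrable_const _), integral_const]
  rcases eq_or_ne (μ {ω | R ω = true}) 0 with h0 | h0
  · simp [measureReal_def, h0]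
  · have := cond_isProbabilityMeasure (μ := μ) h0
    simp

theorem norm_indicator_mul_le {b G x : Ω → ℝ} {c : ℝ} (hc : 0 ≤ c)
    (h : ∀ ω, |G ω * x ω| ≤ b ω) (ω : Ω) : ‖{ω | b ω ≤ c}.indicator G ω * x ω‖ ≤ c := by
  by_cases hω : b ω ≤ c
  · simpa [hω] using (h ω).trans hω
  · simpa [hω] using hc

theorem integral_weight_mul_eif_eq_zero (hm : m ≤ m0) (hR : Measurable R) (hD : Measurable D)
    (hY : Integrable Y μ) (hG : StronglyMeasurable[m] G) (hH : StronglyMeasurable[m] H)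
    (hτ : StronglyMeasurable[m] τ) (hτ' : StronglyMeasurable[m] τ')
    (hπm : StronglyMeasurable[m] π)
    (hout : μ[|{ω | R ω = true}][Y|m] =ᵐ[μ[|{ω | R ω = true}]] fun ω => H ω * τ ω + w ω)
    (hpse : μ[|{ω | R ω = false}][fun ω => if D ω then (1:ℝ) else 0|m]
      =ᵐ[μ[|{ω | R ω = false}]] τ)
    (hπ : μ[fun ω => if R ω then (1:ℝ) else 0|m] =ᵐ[μ] π) (hπ1 : ∀ᵐ ω ∂μ, π ω ≠ 1)
    (hint : Integrable (fun ω => G ω * ((if R ω then 1 else 0) * (Y ω - H ω * τ' ω - w ω) -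
      (if R ω then 0 else 1) * (π ω / (1 - π ω)) * H ω * ((if D ω then 1 else 0) - τ' ω))) μ) :
    ∫ ω, G ω * ((if R ω then 1 else 0) * (Y ω - H ω * τ' ω - w ω) -
      (if R ω then 0 else 1) * (π ω / (1 - π ω)) * H ω * ((if D ω then 1 else 0) - τ' ω)) ∂μ
      = 0 := by
  set b : Ω → ℝ := fun ω => max (max |G ω| |G ω * (π ω / (1 - π ω) * H ω)|)
    (max |G ω * (H ω * (τ ω - τ' ω))| |G ω * (H ω * (τ ω - τ' ω) * (π ω / (1 - π ω)))|)
  have hb : StronglyMeasurable[m] b := by fun_prop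
  refine integral_eq_zero_of_forall_setIntegral_le_eq_zero (hb.mono hm).measurable hint
    fun n => ?_
  have hT : MeasurableSet[m] {ω | b ω ≤ n} := hb.measurableSet_le stronglyMeasurable_const
  rw [← integral_indicator (hm _ hT)]
  simp_rw [Set.indicator_mul_left]
  refine integral_bdd_weight_mul_eif_eq_zero (C := n) hm hR hD hY (hG.indicator hT) hH hτ hτ'
    hπm hout hpse hπ hπ1 ?_ ?_ ?_ ?_ <;> refine ae_of_all _ fun ω => ?_
  · simpa using norm_indicator_mul_le (x := fun _ => 1) n.cast_nonneg
      (fun ω => by rw [mul_one]; exact (le_max_left _ _).trans (le_max_left _ _)) ω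
  · exact norm_indicator_mul_le n.cast_nonneg
      (fun ω => (le_max_right _ _).trans (le_max_left _ _)) ω
  · exact norm_indicator_mul_le n.cast_nonneg
      (fun ω => (le_max_left _ _).trans (le_max_right _ _)) ω
  · exact norm_indicator_mul_le n.cast_nonneg
      (fun ω => (le_max_right _ _).trans (le_max_right _ _)) ω

end Model

theorem Measurable.stronglyMeasurable_comap_comp {Ω β : Type*} [MeasurableSpace β] {f : Ω → β}
    {F : β → ℝ} (hF : Measurable F) :
    StronglyMeasurable[MeasurableSpace.comap f inferInstance] fun ω => F (f ω) :=
  (hF.comp (comap_measurable f)).stronglyMeasurable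

theorem mul_sub_div_eq_div_mul_mul_sub (e a b q L y r h d : ℝ) :
    e * (a / q * y - b / q * r * h * d) / L = e / (q * L) * (a * y - b * r * h * d) := by
  ring

theorem stmt_10_general
    {Ω 𝒳 : Type*} [MeasurableSpace Ω] [MeasurableSpace 𝒳]
    (P : Measure Ω) [IsProbabilityMeasure P]
    (R Z D : Ω → Bool) (X : Ω → 𝒳) (Y : Ω → ℝ)
    (hR : Measurable R) (hZ : Measurable Z) (hD : Measurable D)
    (hX : Measurable X) (hYint : Integrable Y P)
    -- τ(z,x) := P(D=1 | Z=z, X=x, R=1)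
    (tau : Bool → 𝒳 → ℝ) (htau_meas : Measurable fun p : Bool × 𝒳 => tau p.1 p.2)
    -- π(z,x) := P(R=1 | Z=z, X=x), with 0 < π(Z,X) < 1 a.s.
    (pi : Bool → 𝒳 → ℝ) (hpi_meas : Measurable fun p : Bool × 𝒳 => pi p.1 p.2)
    (hpi_ver : (fun ω => pi (Z ω) (X ω)) =ᵐ[P]
      P[(fun ω => if R ω then (1:ℝ) else 0) |
        MeasurableSpace.comap (fun ω => (Z ω, X ω)) inferInstance])
    (hpi_pos : ∀ᵐ ω ∂P, 0 < pi (Z ω) (X ω) ∧ pi (Z ω) (X ω) < 1)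
    -- true outcome decomposition: E(Y | Z, X, R=1) = 𝓗(X)·τ(Z,X) + ω(X) a.s.
    (Hfun wfun : 𝒳 → ℝ) (hHfun_meas : Measurable Hfun)
    (hout : (P[|{ω | R ω = true}])[Y |
        MeasurableSpace.comap (fun ω => (Z ω, X ω)) inferInstance]
      =ᵐ[P[|{ω | R ω = true}]]
        fun ω => Hfun (X ω) * tau (Z ω) (X ω) + wfun (X ω))
    -- propensity score equality: P(D=1 | Z, X, R=0) = τ(Z,X) a.s.
    (hpse : (fun ω => tau (Z ω) (X ω)) =ᵐ[P[|{ω | R ω = false}]]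
      (P[|{ω | R ω = false}])[(fun ω => if D ω then (1:ℝ) else 0) |
        MeasurableSpace.comap (fun ω => (Z ω, X ω)) inferInstance])
    -- arbitrary measurable working models λ̄ : {0,1}×𝒳 → ℝ∖{0} and τ̄ : {0,1}×𝒳 → ℝ
    -- with τ̄(1,X) − τ̄(0,X) ≠ 0 a.s.
    (lambar : Bool → 𝒳 → ℝ) (hlambar_meas : Measurable fun p : Bool × 𝒳 => lambar p.1 p.2)
    (taubar : Bool → 𝒳 → ℝ) (htaubar_meas : Measurable fun p : Bool × 𝒳 => taubar p.1 p.2)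
    -- integrability of the displayed integrands
    (hHint : Integrable (fun ω => Hfun (X ω)) (P[|{ω | R ω = true}]))
    (hint : Integrable (fun ω =>
        (if Z ω then (1:ℝ) else -1) *
            ((if R ω then (1:ℝ) else 0) / (P {ω | R ω = true}).toReal *
                (Y ω - Hfun (X ω) * taubar (Z ω) (X ω) - wfun (X ω)) -
              (if R ω then (0:ℝ) else 1) / (P {ω | R ω = true}).toReal *
                (pi (Z ω) (X ω) / (1 - pi (Z ω) (X ω))) * Hfun (X ω) *
                ((if D ω then (1:ℝ) else 0) - taubar (Z ω) (X ω))) /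
            (lambar (Z ω) (X ω) * (taubar true (X ω) - taubar false (X ω))) +
          (if R ω then (1:ℝ) else 0) / (P {ω | R ω = true}).toReal *
            (Hfun (X ω) - ∫ ω', Hfun (X ω') ∂(P[|{ω | R ω = true}]))) P) :
    -- conclusion: mean zero, with Δ := E[𝓗(X) | R=1]
    ∫ ω,
        ((if Z ω then (1:ℝ) else -1) *
            ((if R ω then (1:ℝ) else 0) / (P {ω | R ω = true}).toReal *
                (Y ω - Hfun (X ω) * taubar (Z ω) (X ω) - wfun (X ω)) -
              (if R ω then (0:ℝ) else 1) / (P {ω | R ω = true}).toReal *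
                (pi (Z ω) (X ω) / (1 - pi (Z ω) (X ω))) * Hfun (X ω) *
                ((if D ω then (1:ℝ) else 0) - taubar (Z ω) (X ω))) /
            (lambar (Z ω) (X ω) * (taubar true (X ω) - taubar false (X ω))) +
          (if R ω then (1:ℝ) else 0) / (P {ω | R ω = true}).toReal *
            (Hfun (X ω) - ∫ ω', Hfun (X ω') ∂(P[|{ω | R ω = true}]))) ∂P = 0 := by
  rw [← measureReal_def] at hint ⊢
  simp_rw [mul_sub_div_eq_div_mul_mul_sub] at hint ⊢
  have hB_int := integrable_ite_div_mul hR (P.real {ω | R ω = true})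
    (F := fun ω => Hfun (X ω) - ∫ ω', Hfun (X ω') ∂(P[|{ω | R ω = true}]))
    (hHint.sub (integrable_const _))
  have hA_int := (integrable_add_iff_integrable_left' hB_int).mp hint
  rw [integral_add hA_int hB_int, integral_ite_div_measureReal_mul_sub_integral_cond hR hHint,
    add_zero]
  have hweight : Measurable fun p : Bool × 𝒳 => (if p.1 then (1:ℝ) else -1) /
      (P.real {ω | R ω = true} * (lambar p.1 p.2 * (taubar true p.2 - taubar false p.2))) := by
    have hsign : Measurable fun p : Bool × 𝒳 => if p.1 then (1:ℝ) else -1 :=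
      (measurable_of_countable fun b : Bool => if b then (1:ℝ) else -1).comp measurable_fst
    have h₁ : Measurable fun p : Bool × 𝒳 => taubar true p.2 :=
      htaubar_meas.comp (measurable_const.prodMk measurable_snd)
    have h₀ : Measurable fun p : Bool × 𝒳 => taubar false p.2 :=
      htaubar_meas.comp (measurable_const.prodMk measurable_snd)
    fun_prop
  have hH : Measurable fun p : Bool × 𝒳 => Hfun p.2 := hHfun_meas.comp measurable_snd
  exact integral_weight_mul_eif_eq_zero (hZ.prodMk hX).comap_le hR hD hYint
    hweight.stronglyMeasurable_comap_comp hH.stronglyMeasurable_comap_comp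
    htau_meas.stronglyMeasurable_comap_comp htaubar_meas.stronglyMeasurable_comap_comp
    hpi_meas.stronglyMeasurable_comap_comp hout hpse.symm hpi_ver.symm
    (hpi_pos.mono fun ω h => h.2.ne) hA_int

/-- Multiple robustness, case 𝓜₃: outcome decomposition and data-source
propensity are correct, while the instrument density `λ̄` and treatment propensity `τ̄`
working models are arbitrary. Then the efficient influence function has mean zero. -/
theorem stmt_10
    {Ω 𝒳 : Type*} [MeasurableSpace Ω] [MeasurableSpace 𝒳] [StandardBorelSpace 𝒳]
    (P : Measure Ω) [IsProbabilityMeasure P]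
    (R Z D : Ω → Bool) (X : Ω → 𝒳) (Y : Ω → ℝ)
    (hR : Measurable R) (hZ : Measurable Z) (hD : Measurable D)
    (hX : Measurable X) (hY : Measurable Y) (hYint : Integrable Y P)
    -- q† := P(R=1) ∈ (0,1)
    (hq : 0 < P {ω | R ω = true} ∧ P {ω | R ω = true} < 1)
    -- τ(z,x) := P(D=1 | Z=z, X=x, R=1)
    (tau : Bool → 𝒳 → ℝ) (htau_meas : Measurable fun p : Bool × 𝒳 => tau p.1 p.2)
    (htau_ver : (fun ω => tau (Z ω) (X ω)) =ᵐ[P[|{ω | R ω = true}]]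
      (P[|{ω | R ω = true}])[(fun ω => if D ω then (1:ℝ) else 0) |
        MeasurableSpace.comap (fun ω => (Z ω, X ω)) inferInstance])
    -- π(z,x) := P(R=1 | Z=z, X=x), with 0 < π(Z,X) < 1 a.s.
    (pi : Bool → 𝒳 → ℝ) (hpi_meas : Measurable fun p : Bool × 𝒳 => pi p.1 p.2)
    (hpi_ver : (fun ω => pi (Z ω) (X ω)) =ᵐ[P]
      P[(fun ω => if R ω then (1:ℝ) else 0) |
        MeasurableSpace.comap (fun ω => (Z ω, X ω)) inferInstance])
    (hpi_pos : ∀ᵐ ω ∂P, 0 < pi (Z ω) (X ω) ∧ pi (Z ω) (X ω) < 1)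
    -- true outcome decomposition: E(Y | Z, X, R=1) = 𝓗(X)·τ(Z,X) + ω(X) a.s.
    (Hfun wfun : 𝒳 → ℝ) (hHfun_meas : Measurable Hfun) (hwfun_meas : Measurable wfun)
    (hout : (P[|{ω | R ω = true}])[Y |
        MeasurableSpace.comap (fun ω => (Z ω, X ω)) inferInstance]
      =ᵐ[P[|{ω | R ω = true}]]
        fun ω => Hfun (X ω) * tau (Z ω) (X ω) + wfun (X ω))
    -- propensity score equality: P(D=1 | Z, X, R=0) = τ(Z,X) a.s.
    (hpse : (fun ω => tau (Z ω) (X ω)) =ᵐ[P[|{ω | R ω = false}]]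
      (P[|{ω | R ω = false}])[(fun ω => if D ω then (1:ℝ) else 0) |
        MeasurableSpace.comap (fun ω => (Z ω, X ω)) inferInstance])
    -- arbitrary measurable working models λ̄ : {0,1}×𝒳 → ℝ∖{0} and τ̄ : {0,1}×𝒳 → ℝ
    -- with τ̄(1,X) − τ̄(0,X) ≠ 0 a.s.
    (lambar : Bool → 𝒳 → ℝ) (hlambar_meas : Measurable fun p : Bool × 𝒳 => lambar p.1 p.2)
    (hlambar_ne : ∀ z x, lambar z x ≠ 0)
    (taubar : Bool → 𝒳 → ℝ) (htaubar_meas : Measurable fun p : Bool × 𝒳 => taubar p.1 p.2)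
    (htaubar_ne : ∀ᵐ ω ∂P, taubar true (X ω) - taubar false (X ω) ≠ 0)
    -- integrability of the displayed integrands
    (hHint : Integrable (fun ω => Hfun (X ω)) (P[|{ω | R ω = true}]))
    (hint : Integrable (fun ω =>
        (if Z ω then (1:ℝ) else -1) *
            ((if R ω then (1:ℝ) else 0) / (P {ω | R ω = true}).toReal *
                (Y ω - Hfun (X ω) * taubar (Z ω) (X ω) - wfun (X ω)) -
              (if R ω then (0:ℝ) else 1) / (P {ω | R ω = true}).toReal *
                (pi (Z ω) (X ω) / (1 - pi (Z ω) (X ω))) * Hfun (X ω) *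
                ((if D ω then (1:ℝ) else 0) - taubar (Z ω) (X ω))) /
            (lambar (Z ω) (X ω) * (taubar true (X ω) - taubar false (X ω))) +
          (if R ω then (1:ℝ) else 0) / (P {ω | R ω = true}).toReal *
            (Hfun (X ω) - ∫ ω', Hfun (X ω') ∂(P[|{ω | R ω = true}]))) P) :
    -- conclusion: mean zero, with Δ := E[𝓗(X) | R=1]
    ∫ ω,
        ((if Z ω then (1:ℝ) else -1) *
            ((if R ω then (1:ℝ) else 0) / (P {ω | R ω = true}).toReal *
                (Y ω - Hfun (X ω) * taubar (Z ω) (X ω) - wfun (X ω)) -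
              (if R ω then (0:ℝ) else 1) / (P {ω | R ω = true}).toReal *
                (pi (Z ω) (X ω) / (1 - pi (Z ω) (X ω))) * Hfun (X ω) *
                ((if D ω then (1:ℝ) else 0) - taubar (Z ω) (X ω))) /
            (lambar (Z ω) (X ω) * (taubar true (X ω) - taubar false (X ω))) +
          (if R ω then (1:ℝ) else 0) / (P {ω | R ω = true}).toReal *
            (Hfun (X ω) - ∫ ω', Hfun (X ω') ∂(P[|{ω | R ω = true}]))) ∂P = 0 :=
  stmt_10_general P R Z D X Y hR hZ hD hX hYint tau htau_meas pi hpi_meas hpi_ver hpi_pos Hfun wfun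
    hHfun_meas hout hpse lambar hlambar_meas taubar htaubar_meas hHint hint
end
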